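/- Let n ≥ 3 and define G : ℕ → ℕ by G(x) = mex {G(x-s) : s ∈ {2, 4n, 4n+2}, s ≤ x}. Then for all k, m ∈ ℕ with m ≤ n-1 and t ∈ {2,3}, we have G(8nk + 4m + t) = 1. -/
import Mathlib


noncomputable def mex (T : Set ℕ) : ℕ := sInf {k : ℕ | k ∉ T}

def subRec (n : ℕ) (G : ℕ → ℕ) : Prop :=
  ∀ x : ℕ, G x = mex {y : ℕ | ∃ s ∈ ({2, 4*n, 4*n+2} : Set ℕ), s ≤ x ∧ y = G (x - s)}

def passRec (n : ℕ) (G0 G1 : ℕ → ℕ) : Prop :=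
  G1 0 = 0 ∧ G1 1 = 0 ∧
  ∀ x : ℕ, 2 ≤ x →
    G1 x = mex ({y : ℕ | ∃ s ∈ ({2, 4*n, 4*n+2} : Set ℕ), s ≤ x ∧ y = G1 (x - s)} ∪ {G0 x})

/-- The conjectured closed form for the Grundy values. -/
noncomputable def fG (n x : ℕ) : ℕ :=
  (if x % (8*n) < 4*n then 0 else 2) + (if x % 4 < 2 then 0 else 1)

lemma mex_eq_of {T : Set ℕ} {a : ℕ} (h1 : a ∉ T) (h2 : ∀ b, b < a → b ∈ T) :
    mex T = a := by
  unfold mex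
  apply le_antisymm
  · exact Nat.sInf_le h1
  · refine le_csInf ⟨a, h1⟩ ?_
    intro k hk
    by_contra hlt
    push_neg at hlt
    exact hk (h2 k hlt)

lemma fval (n q r : ℕ) (hn : 3 ≤ n) (hr : r < 8*n) :
    fG n (8*n*q + r) = (if r < 4*n then 0 else 2) + (if r % 4 < 2 then 0 else 1) := by
  unfold fG
  have h1 : (8*n*q + r) % (8*n) = r := by
    rw [Nat.mul_add_mod, Nat.mod_eq_of_lt hr]
  have h2 : (8*n*q + r) % 4 = r % 4 := by
    have e : 8*n*q = 4*(2*n*q) := by ring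
    rw [e, Nat.mul_add_mod]
  rw [h1, h2]

lemma setEq0 (G : ℕ → ℕ) (n x : ℕ) (hn : 3 ≤ n) (hx : x < 2) :
    {y : ℕ | ∃ s ∈ ({2, 4*n, 4*n+2} : Set ℕ), s ≤ x ∧ y = G (x - s)} = ∅ := by
  ext y
  simp only [Set.mem_setOf_eq, Set.mem_empty_iff_false, iff_false]
  rintro ⟨s, hs, hsx, rfl⟩
  simp only [Set.mem_insert_iff, Set.mem_singleton_iff] at hs
  omega

lemma setEq1 (G : ℕ → ℕ) (n x : ℕ) (hn : 3 ≤ n) (h2 : 2 ≤ x) (h4 : x < 4*n) :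
    {y : ℕ | ∃ s ∈ ({2, 4*n, 4*n+2} : Set ℕ), s ≤ x ∧ y = G (x - s)} = {G (x-2)} := by
  ext y
  simp only [Set.mem_setOf_eq, Set.mem_singleton_iff]
  constructor
  · rintro ⟨s, hs, hsx, rfl⟩
    simp only [Set.mem_insert_iff, Set.mem_singleton_iff] at hs
    rcases hs with rfl | rfl | rfl
    · rfl
    · omega
    · omega
  · rintro rfl
    exact ⟨2, by simp, h2, rfl⟩

lemma setEq2 (G : ℕ → ℕ) (n x : ℕ) (hn : 3 ≤ n) (h2 : 4*n ≤ x) (h4 : x < 4*n+2) :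
    {y : ℕ | ∃ s ∈ ({2, 4*n, 4*n+2} : Set ℕ), s ≤ x ∧ y = G (x - s)}
      = {G (x-2), G (x-4*n)} := by
  ext y
  simp only [Set.mem_setOf_eq, Set.mem_insert_iff, Set.mem_singleton_iff]
  constructor
  · rintro ⟨s, hs, hsx, rfl⟩
    rcases hs with rfl | rfl | rfl
    · left; rfl
    · right; rfl
    · omega
  · rintro (rfl | rfl)
    · exact ⟨2, by simp, by omega, rfl⟩
    · exact ⟨4*n, by simp, h2, rfl⟩

lemma setEq3 (G : ℕ → ℕ) (n x : ℕ) (hn : 3 ≤ n) (h2 : 4*n+2 ≤ x) :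
    {y : ℕ | ∃ s ∈ ({2, 4*n, 4*n+2} : Set ℕ), s ≤ x ∧ y = G (x - s)}
      = {G (x-2), G (x-4*n), G (x-(4*n+2))} := by
  ext y
  simp only [Set.mem_setOf_eq, Set.mem_insert_iff, Set.mem_singleton_iff]
  constructor
  · rintro ⟨s, hs, hsx, rfl⟩
    rcases hs with rfl | rfl | rfl
    · left; rfl
    · right; left; rfl
    · right; right; rfl
  · rintro (rfl | rfl | rfl)
    · exact ⟨2, by simp, by omega, rfl⟩
    · exact ⟨4*n, by simp, by omega, rfl⟩
    · exact ⟨4*n+2, by simp, h2, rfl⟩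

lemma mainG (n : ℕ) (hn : 3 ≤ n) (G : ℕ → ℕ) (hG : subRec n G) :
    ∀ x, G x = fG n x := by
  intro x
  induction x using Nat.strong_induction_on with
  | _ x ih =>
  obtain ⟨q, r, hr, rfl⟩ : ∃ q r, r < 8*n ∧ x = 8*n*q + r :=
    ⟨x / (8*n), x % (8*n), Nat.mod_lt _ (by omega), by rw [Nat.div_add_mod]⟩
  rw [hG]
  rcases q with _ | q'
  · -- q = 0
    rcases Nat.lt_or_ge r 2 with hr2 | hr2
    · -- case 1 : x < 2
      rw [setEq0 G n _ hn (by omega)]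
      rw [mex_eq_of (a := 0) (by simp) (by intro b hb; omega)]
      rw [fval n 0 r hn hr]
      split_ifs <;> omega
    rcases Nat.lt_or_ge r (4*n) with hr4 | hr4
    · -- case 2 : 2 ≤ x < 4n
      rw [setEq1 G n _ hn (by omega) (by omega)]
      have e1 : 8*n*0 + r - 2 = 8*n*0 + (r-2) := by omega
      have h1 := ih (8*n*0 + (r-2)) (by omega)
      rw [e1, h1, fval n 0 (r-2) hn (by omega)]
      by_cases hc : r % 4 < 2
      · have v1 : (if r-2 < 4*n then 0 else 2) + (if (r-2) % 4 < 2 then 0 else 1) = 1 := by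
          split_ifs <;> omega
        rw [v1, mex_eq_of (a := 0) (by simp) (by intro b hb; omega)]
        rw [fval n 0 r hn hr]
        split_ifs <;> omega
      · have v1 : (if r-2 < 4*n then 0 else 2) + (if (r-2) % 4 < 2 then 0 else 1) = 0 := by
          split_ifs <;> omega
        rw [v1, mex_eq_of (a := 1) (by simp)
          (by intro b hb; simp only [Set.mem_singleton_iff]; omega)]
        rw [fval n 0 r hn hr]
        split_ifs <;> omega
    rcases Nat.lt_or_ge r (4*n+2) with hr42 | hr42
    · -- case 3 : 4n ≤ x < 4n+2
      rw [setEq2 G n _ hn (by omega) (by omega)]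
      have e1 : 8*n*0 + r - 2 = 8*n*0 + (r-2) := by omega
      have e2 : 8*n*0 + r - 4*n = 8*n*0 + (r-4*n) := by omega
      rw [e1, e2, ih _ (by omega), ih _ (by omega),
        fval n 0 (r-2) hn (by omega), fval n 0 (r-4*n) hn (by omega)]
      have v1 : (if r-2 < 4*n then 0 else 2) + (if (r-2) % 4 < 2 then 0 else 1) = 1 := by
        split_ifs <;> omega
      have v2 : (if r-4*n < 4*n then 0 else 2) + (if (r-4*n) % 4 < 2 then 0 else 1) = 0 := by
        split_ifs <;> omega
      rw [v1, v2, mex_eq_of (a := 2)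
        (by simp)
        (by intro b hb; simp only [Set.mem_insert_iff, Set.mem_singleton_iff]; omega)]
      rw [fval n 0 r hn hr]
      split_ifs <;> omega
    · -- case 4 : 4n+2 ≤ r < 8n, q = 0
      rw [setEq3 G n _ hn (by omega)]
      have e1 : 8*n*0 + r - 2 = 8*n*0 + (r-2) := by omega
      have e2 : 8*n*0 + r - 4*n = 8*n*0 + (r-4*n) := by omega
      have e3 : 8*n*0 + r - (4*n+2) = 8*n*0 + (r-(4*n+2)) := by omega
      rw [e1, e2, e3, ih _ (by omega), ih _ (by omega), ih _ (by omega),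
        fval n 0 (r-2) hn (by omega), fval n 0 (r-4*n) hn (by omega),
        fval n 0 (r-(4*n+2)) hn (by omega)]
      by_cases hc : r % 4 < 2
      · have v1 : (if r-2 < 4*n then 0 else 2) + (if (r-2) % 4 < 2 then 0 else 1) = 3 := by
          split_ifs <;> omega
        have v2 : (if r-4*n < 4*n then 0 else 2) + (if (r-4*n) % 4 < 2 then 0 else 1) = 0 := by
          split_ifs <;> omega
        have v3 : (if r-(4*n+2) < 4*n then 0 else 2) +
            (if (r-(4*n+2)) % 4 < 2 then 0 else 1) = 1 := by
          split_ifs <;> omega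
        rw [v1, v2, v3, mex_eq_of (a := 2)
          (by simp)
          (by intro b hb; simp only [Set.mem_insert_iff, Set.mem_singleton_iff]; omega)]
        rw [fval n 0 r hn hr]
        split_ifs <;> omega
      · have v1 : (if r-2 < 4*n then 0 else 2) + (if (r-2) % 4 < 2 then 0 else 1) = 2 := by
          split_ifs <;> omega
        have v2 : (if r-4*n < 4*n then 0 else 2) + (if (r-4*n) % 4 < 2 then 0 else 1) = 1 := by
          split_ifs <;> omega
        have v3 : (if r-(4*n+2) < 4*n then 0 else 2) +
            (if (r-(4*n+2)) % 4 < 2 then 0 else 1) = 0 := by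
          split_ifs <;> omega
        rw [v1, v2, v3, mex_eq_of (a := 3)
          (by simp)
          (by intro b hb; simp only [Set.mem_insert_iff, Set.mem_singleton_iff]; omega)]
        rw [fval n 0 r hn hr]
        split_ifs <;> omega
  · -- q = q'+1, so x ≥ 8n
    have key : 8*n*(q'+1) = 8*n*q' + 8*n := by ring
    have hx1 : 4*n+2 ≤ 8*n*(q'+1) + r := by omega
    rw [setEq3 G n _ hn hx1]
    rcases Nat.lt_or_ge r 2 with hr2 | hr2
    · -- case 5 : r < 2
      have e1 : 8*n*(q'+1) + r - 2 = 8*n*q' + (8*n + r - 2) := by omega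
      have e2 : 8*n*(q'+1) + r - 4*n = 8*n*q' + (4*n + r) := by omega
      have e3 : 8*n*(q'+1) + r - (4*n+2) = 8*n*q' + (4*n + r - 2) := by omega
      rw [e1, e2, e3, ih _ (by omega), ih _ (by omega), ih _ (by omega),
        fval n q' _ hn (by omega), fval n q' _ hn (by omega), fval n q' _ hn (by omega)]
      have v1 : (if 8*n+r-2 < 4*n then 0 else 2) + (if (8*n+r-2) % 4 < 2 then 0 else 1) = 3 := by
        split_ifs <;> omega
      have v2 : (if 4*n+r < 4*n then 0 else 2) + (if (4*n+r) % 4 < 2 then 0 else 1) = 2 := by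
        split_ifs <;> omega
      have v3 : (if 4*n+r-2 < 4*n then 0 else 2) + (if (4*n+r-2) % 4 < 2 then 0 else 1) = 1 := by
        split_ifs <;> omega
      rw [v1, v2, v3, mex_eq_of (a := 0) (by simp) (by intro b hb; omega)]
      rw [fval n (q'+1) r hn hr]
      split_ifs <;> omega
    rcases Nat.lt_or_ge r (4*n) with hr4 | hr4
    · -- case 6 : 2 ≤ r < 4n
      have e1 : 8*n*(q'+1) + r - 2 = 8*n*(q'+1) + (r-2) := by omega
      have e2 : 8*n*(q'+1) + r - 4*n = 8*n*q' + (4*n + r) := by omega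
      have e3 : 8*n*(q'+1) + r - (4*n+2) = 8*n*q' + (4*n + r - 2) := by omega
      rw [e1, e2, e3, ih _ (by omega), ih _ (by omega), ih _ (by omega),
        fval n (q'+1) _ hn (by omega), fval n q' _ hn (by omega), fval n q' _ hn (by omega)]
      by_cases hc : r % 4 < 2
      · have v1 : (if r-2 < 4*n then 0 else 2) + (if (r-2) % 4 < 2 then 0 else 1) = 1 := by
          split_ifs <;> omega
        have v2 : (if 4*n+r < 4*n then 0 else 2) + (if (4*n+r) % 4 < 2 then 0 else 1) = 2 := by
          split_ifs <;> omega
        have v3 : (if 4*n+r-2 < 4*n then 0 else 2) + (if (4*n+r-2) % 4 < 2 then 0 else 1) = 3 := by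
          split_ifs <;> omega
        rw [v1, v2, v3, mex_eq_of (a := 0) (by simp) (by intro b hb; omega)]
        rw [fval n (q'+1) r hn hr]
        split_ifs <;> omega
      · have v1 : (if r-2 < 4*n then 0 else 2) + (if (r-2) % 4 < 2 then 0 else 1) = 0 := by
          split_ifs <;> omega
        have v2 : (if 4*n+r < 4*n then 0 else 2) + (if (4*n+r) % 4 < 2 then 0 else 1) = 3 := by
          split_ifs <;> omega
        have v3 : (if 4*n+r-2 < 4*n then 0 else 2) + (if (4*n+r-2) % 4 < 2 then 0 else 1) = 2 := by
          split_ifs <;> omega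
        rw [v1, v2, v3, mex_eq_of (a := 1)
          (by simp)
          (by intro b hb; simp only [Set.mem_insert_iff, Set.mem_singleton_iff]; omega)]
        rw [fval n (q'+1) r hn hr]
        split_ifs <;> omega
    rcases Nat.lt_or_ge r (4*n+2) with hr42 | hr42
    · -- case 7 : 4n ≤ r < 4n+2
      have e1 : 8*n*(q'+1) + r - 2 = 8*n*(q'+1) + (r-2) := by omega
      have e2 : 8*n*(q'+1) + r - 4*n = 8*n*(q'+1) + (r-4*n) := by omega
      have e3 : 8*n*(q'+1) + r - (4*n+2) = 8*n*q' + (4*n + r - 2) := by omega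
      rw [e1, e2, e3, ih _ (by omega), ih _ (by omega), ih _ (by omega),
        fval n (q'+1) _ hn (by omega), fval n (q'+1) _ hn (by omega), fval n q' _ hn (by omega)]
      have v1 : (if r-2 < 4*n then 0 else 2) + (if (r-2) % 4 < 2 then 0 else 1) = 1 := by
        split_ifs <;> omega
      have v2 : (if r-4*n < 4*n then 0 else 2) + (if (r-4*n) % 4 < 2 then 0 else 1) = 0 := by
        split_ifs <;> omega
      have v3 : (if 4*n+r-2 < 4*n then 0 else 2) + (if (4*n+r-2) % 4 < 2 then 0 else 1) = 3 := by
        split_ifs <;> omega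
      rw [v1, v2, v3, mex_eq_of (a := 2)
        (by simp)
        (by intro b hb; simp only [Set.mem_insert_iff, Set.mem_singleton_iff]; omega)]
      rw [fval n (q'+1) r hn hr]
      split_ifs <;> omega
    · -- case 4' : 4n+2 ≤ r < 8n, q ≥ 1
      have e1 : 8*n*(q'+1) + r - 2 = 8*n*(q'+1) + (r-2) := by omega
      have e2 : 8*n*(q'+1) + r - 4*n = 8*n*(q'+1) + (r-4*n) := by omega
      have e3 : 8*n*(q'+1) + r - (4*n+2) = 8*n*(q'+1) + (r-(4*n+2)) := by omega
      rw [e1, e2, e3, ih _ (by omega), ih _ (by omega), ih _ (by omega),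
        fval n (q'+1) _ hn (by omega), fval n (q'+1) _ hn (by omega),
        fval n (q'+1) _ hn (by omega)]
      by_cases hc : r % 4 < 2
      · have v1 : (if r-2 < 4*n then 0 else 2) + (if (r-2) % 4 < 2 then 0 else 1) = 3 := by
          split_ifs <;> omega
        have v2 : (if r-4*n < 4*n then 0 else 2) + (if (r-4*n) % 4 < 2 then 0 else 1) = 0 := by
          split_ifs <;> omega
        have v3 : (if r-(4*n+2) < 4*n then 0 else 2) +
            (if (r-(4*n+2)) % 4 < 2 then 0 else 1) = 1 := by
          split_ifs <;> omega
        rw [v1, v2, v3, mex_eq_of (a := 2)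
          (by simp)
          (by intro b hb; simp only [Set.mem_insert_iff, Set.mem_singleton_iff]; omega)]
        rw [fval n (q'+1) r hn hr]
        split_ifs <;> omega
      · have v1 : (if r-2 < 4*n then 0 else 2) + (if (r-2) % 4 < 2 then 0 else 1) = 2 := by
          split_ifs <;> omega
        have v2 : (if r-4*n < 4*n then 0 else 2) + (if (r-4*n) % 4 < 2 then 0 else 1) = 1 := by
          split_ifs <;> omega
        have v3 : (if r-(4*n+2) < 4*n then 0 else 2) +
            (if (r-(4*n+2)) % 4 < 2 then 0 else 1) = 0 := by
          split_ifs <;> omega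
        rw [v1, v2, v3, mex_eq_of (a := 3)
          (by simp)
          (by intro b hb; simp only [Set.mem_insert_iff, Set.mem_singleton_iff]; omega)]
        rw [fval n (q'+1) r hn hr]
        split_ifs <;> omega

theorem stmt (n : ℕ) (hn : 3 ≤ n) (G : ℕ → ℕ) (hG : subRec n G) :
    ∀ k m t : ℕ, m ≤ n - 1 → (t = 2 ∨ t = 3) → G (8*n*k + 4*m + t) = 1 := by
  intro k m t hm ht
  have e : 8*n*k + 4*m + t = 8*n*k + (4*m + t) := by omega
  rw [mainG n hn G hG, e, fval n k (4*m+t) hn (by omega)]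
  split_ifs <;> omega
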